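/- Assume the subset LCM assumption (E(x_j | X_F) = E(x_j X_Fᵀ)Σ_F^{-1}X_F a.s.). For m^{DR3}_F = Σ_{h=1}^H p_h U_{F,h}ᵀ Σ_F^{-1} U_{F,h} and M^{DR2}_F = Σ_{h=1}^H p_h Σ_F^{-1/2} U_{F,h} U_{F,h}ᵀ Σ_F^{-1/2}, and for any F ⊂ I and j ∈ F^c, trace(m^{DR3}_{F∪{j}} M^{DR2}_{F∪{j}}) = trace(m^{DR3}_F M^{DR2}_F) + 2 κ_F ϱ_{j|F} + ϱ_{j|F}². -/

import Mathlib

/-!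
Write `G = insert j F`. Under the LCM assumption the residual is linear,
`x_{j|F} = x_j - θᵀ X_F` with `θ = Σ_F⁻¹ E(x_j X_F)`; hence the Schur complement
`E x_j² - θᵀ E(x_j X_F)` of `Σ_F` in `Σ_G` equals `σ²_{j|F}`, and the `j`-th coordinate of
`U_{G,h}` exceeds `θᵀ U_{F,h}` by `σ_{j|F} γ_{j|F,h}`. Block elimination then gives
`U_{G,h}ᵀ Σ_G⁻¹ U_{G,h} = U_{F,h}ᵀ Σ_F⁻¹ U_{F,h} + γ_{j|F,h}²`, so `κ_G = κ_F + ϱ_{j|F}`.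
Since `Σ^{-1/2} Σ^{-1/2} = Σ⁻¹`, `trace M^{DR2}_F = κ_F = m^{DR3}_F`, and the identity is the
expansion of `κ_G² = (κ_F + ϱ_{j|F})²`.
-/

open MeasureTheory ProbabilityTheory Matrix Filter Finset
open scoped BigOperators ENNReal

noncomputable section

namespace TracePursuit

variable {Ω : Type*}

/-- Second-moment (= covariance, under mean zero) matrix of the coordinates of `X` in `F`. -/
def covM [MeasurableSpace Ω] (μ : Measure Ω) {p : ℕ} (X : Ω → Fin p → ℝ)
    (F : Finset (Fin p)) : Matrix F F ℝ :=
  Matrix.of fun i j => ∫ ω, X ω i.1 * X ω j.1 ∂μ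

/-- Slice probability `p_h = P(Y ∈ J_h)`. -/
def sliceP [MeasurableSpace Ω] (μ : Measure Ω) {H : ℕ} (Y : Ω → ℝ)
    (J : Fin H → Set ℝ) (h : Fin H) : ℝ :=
  (μ (Y ⁻¹' J h)).toReal

/-- Slice mean vector `U_{F,h} = E(X_F | Y ∈ J_h)`. -/
def sliceU [MeasurableSpace Ω] (μ : Measure Ω) {p H : ℕ} (X : Ω → Fin p → ℝ)
    (Y : Ω → ℝ) (J : Fin H → Set ℝ) (F : Finset (Fin p)) (h : Fin H) : F → ℝ :=
  fun i => (∫ ω in Y ⁻¹' J h, X ω i.1 ∂μ) / sliceP μ Y J h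

/-- Slice second-moment matrix `V_{F,h} = E(X_F X_Fᵀ | Y ∈ J_h)`. -/
def sliceV [MeasurableSpace Ω] (μ : Measure Ω) {p H : ℕ} (X : Ω → Fin p → ℝ)
    (Y : Ω → ℝ) (J : Fin H → Set ℝ) (F : Finset (Fin p)) (h : Fin H) : Matrix F F ℝ :=
  Matrix.of fun i j => (∫ ω in Y ⁻¹' J h, X ω i.1 * X ω j.1 ∂μ) / sliceP μ Y J h

/-- The SIR kernel matrix `M^SIR_F = Σ_F^{-1/2} (Σ_h p_h U_{F,h} U_{F,h}ᵀ) Σ_F^{-1/2}`,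
where `S` is the inverse square root `Σ_F^{-1/2}`. -/
def MSIR [MeasurableSpace Ω] (μ : Measure Ω) {p H : ℕ} (X : Ω → Fin p → ℝ)
    (Y : Ω → ℝ) (J : Fin H → Set ℝ) (F : Finset (Fin p)) (S : Matrix F F ℝ) :
    Matrix F F ℝ :=
  S * (∑ h, sliceP μ Y J h • vecMulVec (sliceU μ X Y J F h) (sliceU μ X Y J F h)) * S

/-- The SAVE kernel matrix
`M^SAVE_F = Σ_h p_h (Σ_F^{-1/2}(Σ_F - V_{F,h} + U_{F,h}U_{F,h}ᵀ)Σ_F^{-1/2})²`. -/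
def MSAVE [MeasurableSpace Ω] (μ : Measure Ω) {p H : ℕ} (X : Ω → Fin p → ℝ)
    (Y : Ω → ℝ) (J : Fin H → Set ℝ) (F : Finset (Fin p)) (S : Matrix F F ℝ) :
    Matrix F F ℝ :=
  ∑ h, sliceP μ Y J h •
    (S * (covM μ X F - sliceV μ X Y J F h
        + vecMulVec (sliceU μ X Y J F h) (sliceU μ X Y J F h)) * S) ^ 2

/-- `κ_F = Σ_h p_h U_{F,h}ᵀ Σ_F⁻¹ U_{F,h}`. -/
def kappaF [MeasurableSpace Ω] (μ : Measure Ω) {p H : ℕ} (X : Ω → Fin p → ℝ)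
    (Y : Ω → ℝ) (J : Fin H → Set ℝ) (F : Finset (Fin p)) : ℝ :=
  ∑ h, sliceP μ Y J h *
    (sliceU μ X Y J F h ⬝ᵥ (covM μ X F)⁻¹.mulVec (sliceU μ X Y J F h))

/-- The directional-regression kernel matrix `M^DR_F`. -/
def MDR [MeasurableSpace Ω] (μ : Measure Ω) {p H : ℕ} (X : Ω → Fin p → ℝ)
    (Y : Ω → ℝ) (J : Fin H → Set ℝ) (F : Finset (Fin p)) (S : Matrix F F ℝ) :
    Matrix F F ℝ :=
  (2 : ℝ) • (∑ h, sliceP μ Y J h • (S * sliceV μ X Y J F h * S) ^ 2)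
  + (2 : ℝ) • (∑ h, sliceP μ Y J h •
      (S * vecMulVec (sliceU μ X Y J F h) (sliceU μ X Y J F h) * S)) ^ 2
  + (2 : ℝ) • (kappaF μ X Y J F •
      (∑ h, sliceP μ Y J h •
        (S * vecMulVec (sliceU μ X Y J F h) (sliceU μ X Y J F h) * S)))
  - (2 : ℝ) • (1 : Matrix F F ℝ)

/-- The σ-algebra generated by `X_F`. -/
def mF [MeasurableSpace Ω] {p : ℕ} (X : Ω → Fin p → ℝ) (F : Finset (Fin p)) :
    MeasurableSpace Ω :=
  MeasurableSpace.comap (fun ω => fun i : F => X ω i.1) inferInstance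

/-- `θ_{j|F} = Σ_F⁻¹ E(x_j X_F)`. -/
def thetaJF [MeasurableSpace Ω] (μ : Measure Ω) {p : ℕ} (X : Ω → Fin p → ℝ)
    (F : Finset (Fin p)) (j : Fin p) : F → ℝ :=
  (covM μ X F)⁻¹.mulVec fun i => ∫ ω, X ω j * X ω i.1 ∂μ

/-- The subset linear conditional mean assumption:
for every `F ⊂ I` and `j ∈ Fᶜ`, `E(x_j | X_F) = E(x_j X_Fᵀ) Σ_F⁻¹ X_F` a.s. -/
def SubsetLCM [MeasurableSpace Ω] (μ : Measure Ω) {p : ℕ} (X : Ω → Fin p → ℝ) : Prop :=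
  ∀ (F : Finset (Fin p)) (j : Fin p), j ∉ F →
    (μ[fun ω => X ω j | mF X F]) =ᵐ[μ] fun ω => ∑ i : F, thetaJF μ X F j i * X ω i.1

/-- The subset constant conditional variance assumption:
for every `F ⊂ I` and `j ∈ Fᶜ`, `var(x_j | X_F)` is a.s. constant. -/
def SubsetCCV [MeasurableSpace Ω] (μ : Measure Ω) {p : ℕ} (X : Ω → Fin p → ℝ) : Prop :=
  ∀ (F : Finset (Fin p)) (j : Fin p), j ∉ F → ∃ c : ℝ,
    (fun ω => (μ[fun ω' => X ω' j ^ 2 | mF X F]) ω - ((μ[fun ω' => X ω' j | mF X F]) ω) ^ 2)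
      =ᵐ[μ] fun _ => c

/-- The residual `x_{j|F} = x_j - E(x_j | X_F)`. -/
def xres [MeasurableSpace Ω] (μ : Measure Ω) {p : ℕ} (X : Ω → Fin p → ℝ)
    (F : Finset (Fin p)) (j : Fin p) : Ω → ℝ :=
  fun ω => X ω j - (μ[fun ω' => X ω' j | mF X F]) ω

/-- Variance of a real function. -/
def varF [MeasurableSpace Ω] (μ : Measure Ω) (f : Ω → ℝ) : ℝ :=
  ∫ ω, f ω ^ 2 ∂μ - (∫ ω, f ω ∂μ) ^ 2

/-- `σ²_{j|F} = var(x_{j|F})`. -/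
def sigma2 [MeasurableSpace Ω] (μ : Measure Ω) {p : ℕ} (X : Ω → Fin p → ℝ)
    (F : Finset (Fin p)) (j : Fin p) : ℝ :=
  varF μ (xres μ X F j)

/-- `γ_{j|F} = x_{j|F}/σ_{j|F}`. -/
def gammaRes [MeasurableSpace Ω] (μ : Measure Ω) {p : ℕ} (X : Ω → Fin p → ℝ)
    (F : Finset (Fin p)) (j : Fin p) : Ω → ℝ :=
  fun ω => xres μ X F j ω / Real.sqrt (sigma2 μ X F j)

/-- `γ_{j|F,h} = E(γ_{j|F} | Y ∈ J_h)`. -/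
def gammaH [MeasurableSpace Ω] (μ : Measure Ω) {p H : ℕ} (X : Ω → Fin p → ℝ)
    (Y : Ω → ℝ) (J : Fin H → Set ℝ) (F : Finset (Fin p)) (j : Fin p) (h : Fin H) : ℝ :=
  (∫ ω in Y ⁻¹' J h, gammaRes μ X F j ω ∂μ) / sliceP μ Y J h

/-- `ζ_{j|F,h} = E(γ_{j|F}² | Y ∈ J_h)`. -/
def zetaH [MeasurableSpace Ω] (μ : Measure Ω) {p H : ℕ} (X : Ω → Fin p → ℝ)
    (Y : Ω → ℝ) (J : Fin H → Set ℝ) (F : Finset (Fin p)) (j : Fin p) (h : Fin H) : ℝ :=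
  (∫ ω in Y ⁻¹' J h, gammaRes μ X F j ω ^ 2 ∂μ) / sliceP μ Y J h

/-- `E(X_F γ_{j|F} | Y ∈ J_h)`. -/
def sliceXGamma [MeasurableSpace Ω] (μ : Measure Ω) {p H : ℕ} (X : Ω → Fin p → ℝ)
    (Y : Ω → ℝ) (J : Fin H → Set ℝ) (F : Finset (Fin p)) (j : Fin p) (h : Fin H) : F → ℝ :=
  fun i => (∫ ω in Y ⁻¹' J h, X ω i.1 * gammaRes μ X F j ω ∂μ) / sliceP μ Y J h

/-- `φ_{j|F,h} = Σ_F^{-1/2} (U_{F,h} γ_{j|F,h} - E(X_F γ_{j|F} | Y ∈ J_h))`. -/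
def phiH [MeasurableSpace Ω] (μ : Measure Ω) {p H : ℕ} (X : Ω → Fin p → ℝ)
    (Y : Ω → ℝ) (J : Fin H → Set ℝ) (F : Finset (Fin p)) (S : Matrix F F ℝ)
    (j : Fin p) (h : Fin H) : F → ℝ :=
  S.mulVec fun i => sliceU μ X Y J F h i * gammaH μ X Y J F j h
    - sliceXGamma μ X Y J F j h i

/-- `ν_{j|F,h} = Σ_F^{-1/2} E(X_F γ_{j|F} | Y ∈ J_h)`. -/
def nuH [MeasurableSpace Ω] (μ : Measure Ω) {p H : ℕ} (X : Ω → Fin p → ℝ)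
    (Y : Ω → ℝ) (J : Fin H → Set ℝ) (F : Finset (Fin p)) (S : Matrix F F ℝ)
    (j : Fin p) (h : Fin H) : F → ℝ :=
  S.mulVec (sliceXGamma μ X Y J F j h)

/-- `ι_{j|F,h} = Σ_F^{-1/2} U_{F,h} γ_{j|F,h}`. -/
def iotaH [MeasurableSpace Ω] (μ : Measure Ω) {p H : ℕ} (X : Ω → Fin p → ℝ)
    (Y : Ω → ℝ) (J : Fin H → Set ℝ) (F : Finset (Fin p)) (S : Matrix F F ℝ)
    (j : Fin p) (h : Fin H) : F → ℝ :=
  gammaH μ X Y J F j h • S.mulVec (sliceU μ X Y J F h)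

/-- `ι_{j|F} = Σ_h p_h ι_{j|F,h}`. -/
def iotaSum [MeasurableSpace Ω] (μ : Measure Ω) {p H : ℕ} (X : Ω → Fin p → ℝ)
    (Y : Ω → ℝ) (J : Fin H → Set ℝ) (F : Finset (Fin p)) (S : Matrix F F ℝ)
    (j : Fin p) : F → ℝ :=
  ∑ h, sliceP μ Y J h • iotaH μ X Y J F S j h

/-- `ϱ_{j|F} = Σ_h p_h γ_{j|F,h}²`. -/
def rhoJF [MeasurableSpace Ω] (μ : Measure Ω) {p H : ℕ} (X : Ω → Fin p → ℝ)
    (Y : Ω → ℝ) (J : Fin H → Set ℝ) (F : Finset (Fin p)) (j : Fin p) : ℝ :=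
  ∑ h, sliceP μ Y J h * gammaH μ X Y J F j h ^ 2

/-- `{J_h}` is a measurable partition of the sample space of `Y`. -/
def IsSlicePartition {H : ℕ} (J : Fin H → Set ℝ) : Prop :=
  (∀ h, MeasurableSet (J h)) ∧ Pairwise (Function.onFun Disjoint J) ∧ (⋃ h, J h) = Set.univ

/-- `S` is a symmetric inverse square root of `Sig`, i.e. `S = Σ'^{-1/2}`. -/
def IsInvSqrt {n : Type*} [Fintype n] [DecidableEq n] (S Sig : Matrix n n ℝ) : Prop :=
  S.IsSymm ∧ S * S = Sig⁻¹

end TracePursuit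

namespace TracePursuit

/-- `M^{DR2}_F = Σ_h p_h Σ_F^{-1/2} U_{F,h} U_{F,h}ᵀ Σ_F^{-1/2}`. -/
def MDR2 {Ω : Type*} [MeasurableSpace Ω] (μ : Measure Ω) {p H : ℕ}
    (X : Ω → Fin p → ℝ) (Y : Ω → ℝ) (J : Fin H → Set ℝ) (F : Finset (Fin p))
    (S : Matrix F F ℝ) : Matrix F F ℝ :=
  ∑ h, sliceP μ Y J h • (S * vecMulVec (sliceU μ X Y J F h) (sliceU μ X Y J F h) * S)

end TracePursuit

namespace TracePursuit

section InsertBlock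

variable {ι : Type*} [DecidableEq ι] {F : Finset ι} {j : ι}

def inclInsert (j : ι) (F : Finset ι) (i : F) : ↥(insert j F) :=
  ⟨i, mem_insert_of_mem i.2⟩

def selfInsert (j : ι) (F : Finset ι) : ↥(insert j F) :=
  ⟨j, mem_insert_self j F⟩

def extendInsert (j : ι) (y : F → ℝ) (c : ℝ) : ↥(insert j F) → ℝ :=
  fun i => if h : i.1 ∈ F then y ⟨i, h⟩ else c

theorem sum_coe_insert {M : Type*} [AddCommMonoid M] (hj : j ∉ F)
    (f : ↥(insert j F) → M) :
    ∑ i, f i = f (selfInsert j F) + ∑ i : F, f (inclInsert j F i) := by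
  rw [univ_eq_attach, attach_insert, sum_insert, sum_image, univ_eq_attach]
  · rfl
  · exact fun x _ y _ hxy => Subtype.ext (by simpa using hxy)
  · simp only [mem_image, not_exists, not_and]
    intro x _ hx
    obtain rfl : x.1 = j := congrArg Subtype.val hx
    exact hj x.2

theorem extendInsert_self (hj : j ∉ F) (y : F → ℝ) (c : ℝ) :
    extendInsert j y c (selfInsert j F) = c :=
  dif_neg hj

theorem extendInsert_incl (y : F → ℝ) (c : ℝ) (i : F) :
    extendInsert j y c (inclInsert j F i) = y i :=
  dif_pos i.2

theorem extendInsert_comp_incl (hj : j ∉ F) (U : ↥(insert j F) → ℝ) :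
    extendInsert j (U ∘ inclInsert j F) (U (selfInsert j F)) = U := by
  funext ⟨i, hi⟩
  rcases mem_insert.1 hi with rfl | hiF
  · exact extendInsert_self hj _ _
  · exact extendInsert_incl _ _ ⟨i, hiF⟩

theorem dotProduct_extendInsert (hj : j ∉ F) (U : ↥(insert j F) → ℝ)
    (y : F → ℝ) (c : ℝ) :
    U ⬝ᵥ extendInsert j y c = U (selfInsert j F) * c + (U ∘ inclInsert j F) ⬝ᵥ y := by
  simp only [dotProduct, sum_coe_insert hj, extendInsert_self hj, extendInsert_incl,
    Function.comp_apply]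

theorem mulVec_extendInsert (hj : j ∉ F) (T : Matrix ↥(insert j F) ↥(insert j F) ℝ)
    (y : F → ℝ) (c : ℝ) :
    T *ᵥ extendInsert j y c
      = extendInsert j
          (c • (fun i => T (inclInsert j F i) (selfInsert j F))
            + T.submatrix (inclInsert j F) (inclInsert j F) *ᵥ y)
          (T (selfInsert j F) (selfInsert j F) * c
            + (fun i => T (selfInsert j F) (inclInsert j F i)) ⬝ᵥ y) := by
  conv_lhs => rw [← extendInsert_comp_incl hj (T *ᵥ _)]
  congr 1
  · funext i
    simp only [Function.comp_apply, mulVec, dotProduct_extendInsert hj, Pi.add_apply,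
      Pi.smul_apply, smul_eq_mul, mul_comm c, add_right_inj]
    rfl
  · simp only [mulVec, dotProduct_extendInsert hj, add_right_inj]
    rfl

end InsertBlock

section SchurComplement

variable {ι : Type*} [DecidableEq ι] {F : Finset ι} {j : ι}
  {T : Matrix ↥(insert j F) ↥(insert j F) ℝ} {θ : F → ℝ}

theorem schur_complement_ne_zero (hj : j ∉ F) (hT : T.IsSymm) (hTdet : IsUnit T.det)
    (hθ : T.submatrix (inclInsert j F) (inclInsert j F) *ᵥ θ
      = fun i => T (selfInsert j F) (inclInsert j F i)) :
    T (selfInsert j F) (selfInsert j F)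
      - θ ⬝ᵥ (fun i => T (selfInsert j F) (inclInsert j F i)) ≠ 0 := by
  intro hs
  have hker : T *ᵥ extendInsert j (-θ) 1 = 0 := by
    have hcol : (fun i => T (inclInsert j F i) (selfInsert j F))
        = fun i => T (selfInsert j F) (inclInsert j F i) :=
      funext fun i => hT.apply _ _
    rw [mulVec_extendInsert hj, mulVec_neg, hθ, dotProduct_neg, hcol, one_smul, add_neg_cancel,
      mul_one, ← sub_eq_add_neg, dotProduct_comm, hs]
    funext i
    simp [extendInsert]
  have := congrFun (eq_zero_of_mulVec_eq_zero hTdet.ne_zero hker) (selfInsert j F)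
  simp only [extendInsert_self hj, Pi.zero_apply, one_ne_zero] at this

theorem dotProduct_nonsing_inv_mulVec_insert (hj : j ∉ F) (hT : T.IsSymm)
    (hTdet : IsUnit T.det)
    (hAdet : IsUnit (T.submatrix (inclInsert j F) (inclInsert j F)).det)
    (hθ : T.submatrix (inclInsert j F) (inclInsert j F) *ᵥ θ
      = fun i => T (selfInsert j F) (inclInsert j F i))
    (U : ↥(insert j F) → ℝ) :
    U ⬝ᵥ T⁻¹ *ᵥ U
      = (U ∘ inclInsert j F) ⬝ᵥ (T.submatrix (inclInsert j F) (inclInsert j F))⁻¹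
            *ᵥ (U ∘ inclInsert j F)
        + (U (selfInsert j F) - θ ⬝ᵥ (U ∘ inclInsert j F)) ^ 2
          / (T (selfInsert j F) (selfInsert j F)
              - θ ⬝ᵥ (fun i => T (selfInsert j F) (inclInsert j F i))) := by
  have hs := schur_complement_ne_zero hj hT hTdet hθ
  set A := T.submatrix (inclInsert j F) (inclInsert j F)
  set b : F → ℝ := fun i => T (selfInsert j F) (inclInsert j F i)
  set s := T (selfInsert j F) (selfInsert j F) - θ ⬝ᵥ b with hs_def
  set u := U ∘ inclInsert j F
  set v := A⁻¹ *ᵥ u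
  set c := (U (selfInsert j F) - θ ⬝ᵥ u) / s with hc
  have hAv : A *ᵥ v = u := by rw [mulVec_mulVec, mul_nonsing_inv _ hAdet, one_mulVec]
  have hbv : b ⬝ᵥ v = θ ⬝ᵥ u :=
    calc b ⬝ᵥ v = (Aᵀ *ᵥ θ) ⬝ᵥ v := by rw [(hT.submatrix _).eq, hθ]
      _ = θ ⬝ᵥ u := by rw [mulVec_transpose, ← dotProduct_mulVec, hAv]
  have hsol : T *ᵥ extendInsert j (v - c • θ) c = U := by
    have hcol : (fun i => T (inclInsert j F i) (selfInsert j F)) = b :=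
      funext fun i => hT.apply _ _
    rw [mulVec_extendInsert hj, hcol, mulVec_sub, mulVec_smul, hθ, hAv,
      dotProduct_sub, dotProduct_smul, hbv, smul_eq_mul, dotProduct_comm b θ]
    conv_rhs => rw [← extendInsert_comp_incl hj U]
    congr 1
    · abel
    · have hcs : c * s = U (selfInsert j F) - θ ⬝ᵥ u := div_mul_cancel₀ _ hs
      rw [hs_def] at hcs
      linear_combination hcs
  rw [← hsol, mulVec_mulVec, nonsing_inv_mul _ hTdet, one_mulVec, hsol,
    dotProduct_extendInsert hj, dotProduct_sub, dotProduct_smul, smul_eq_mul,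
    dotProduct_comm u θ, hc]
  field_simp
  ring

end SchurComplement

section Integrals

variable {Ω κ : Type*} [MeasurableSpace Ω] {μ : Measure Ω} [Fintype κ]
  {f : Ω → ℝ} {g : κ → Ω → ℝ}

theorem integral_sub_sum_mul (hf : Integrable f μ) (hg : ∀ i, Integrable (g i) μ)
    (θ : κ → ℝ) :
    ∫ ω, (f ω - ∑ i, θ i * g i ω) ∂μ = ∫ ω, f ω ∂μ - θ ⬝ᵥ fun i => ∫ ω, g i ω ∂μ := by
  rw [integral_sub hf (integrable_finsetSum _ fun i _ => (hg i).const_mul (θ i)),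
    integral_finsetSum _ fun i _ => (hg i).const_mul (θ i)]
  simp only [integral_const_mul, dotProduct]

theorem integral_sub_sum_mul_sq (hf : MemLp f 2 μ) (hg : ∀ i, MemLp (g i) 2 μ) (θ : κ → ℝ) :
    ∫ ω, (f ω - ∑ i, θ i * g i ω) ^ 2 ∂μ
      = ∫ ω, f ω * f ω ∂μ - 2 * θ ⬝ᵥ (fun i => ∫ ω, f ω * g i ω ∂μ)
        + θ ⬝ᵥ (Matrix.of (fun i k => ∫ ω, g i ω * g k ω ∂μ) *ᵥ θ) := by
  have hsq : ∀ ω, (f ω - ∑ i, θ i * g i ω) ^ 2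
      = f ω * f ω - ∑ i, θ i * (2 * (f ω * g i ω) - ∑ k, θ k * (g i ω * g k ω)) := by
    intro ω
    have hlin : ∑ i, θ i * (2 * (f ω * g i ω)) = 2 * f ω * ∑ i, θ i * g i ω := by
      rw [mul_sum]
      exact sum_congr rfl fun i _ => by ring
    have hquad : ∑ i, θ i * ∑ k, θ k * (g i ω * g k ω)
        = (∑ i, θ i * g i ω) * ∑ k, θ k * g k ω := by
      rw [sum_mul_sum]
      exact sum_congr rfl fun i _ => by rw [mul_sum]; exact sum_congr rfl fun k _ => by ring
    simp only [mul_sub, sum_sub_distrib, hlin, hquad]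
    ring
  have hfg : ∀ i, Integrable (fun ω => 2 * (f ω * g i ω)) μ :=
    fun i => (hf.integrable_mul (hg i)).const_mul 2
  have hgg : ∀ i k, Integrable (fun ω => g i ω * g k ω) μ :=
    fun i k => (hg i).integrable_mul (hg k)
  simp_rw [hsq]
  rw [integral_sub_sum_mul (f := fun ω => f ω * f ω)
    (g := fun i ω => 2 * (f ω * g i ω) - ∑ k, θ k * (g i ω * g k ω)) (hf.integrable_mul hf)
    fun i => (hfg i).sub (integrable_finsetSum _ fun k _ => (hgg i k).const_mul (θ k))]
  simp only [integral_sub_sum_mul (hfg _) (hgg _), integral_const_mul]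
  have hvec : (fun i => 2 * ∫ ω, f ω * g i ω ∂μ - θ ⬝ᵥ fun k => ∫ ω, g i ω * g k ω ∂μ)
      = (2 : ℝ) • (fun i => ∫ ω, f ω * g i ω ∂μ)
        - Matrix.of (fun i k => ∫ ω, g i ω * g k ω ∂μ) *ᵥ θ :=
    funext fun i => by simp [mulVec, dotProduct_comm θ]
  rw [hvec, dotProduct_sub, dotProduct_smul, smul_eq_mul]
  ring

end Integrals

section Covariance

variable {Ω : Type*} [MeasurableSpace Ω] {μ : Measure Ω} {p H : ℕ} {X : Ω → Fin p → ℝ}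
  {F : Finset (Fin p)} {j : Fin p}

theorem covM_posDef (hpos : (covM μ X univ).PosDef) (G : Finset (Fin p)) :
    (covM μ X G).PosDef :=
  hpos.submatrix (e := fun i : G => ⟨i.1, mem_univ _⟩) fun _ _ h => Subtype.ext (by simpa using h)

theorem isUnit_covM_det (hpos : (covM μ X univ).PosDef) (G : Finset (Fin p)) :
    IsUnit (covM μ X G).det :=
  (isUnit_iff_isUnit_det _).mp (covM_posDef hpos G).isUnit

theorem covM_isSymm (G : Finset (Fin p)) : (covM μ X G).IsSymm := by
  ext i k
  simp only [transpose_apply, covM, of_apply, mul_comm]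

theorem covM_mulVec_thetaJF (hF : IsUnit (covM μ X F).det) :
    covM μ X F *ᵥ thetaJF μ X F j = fun i : F => ∫ ω, X ω j * X ω i ∂μ := by
  rw [thetaJF, mulVec_mulVec, mul_nonsing_inv _ hF, one_mulVec]

theorem trace_MDR2 {Y : Ω → ℝ} {J : Fin H → Set ℝ} {S : Matrix F F ℝ}
    (hS : S * S = (covM μ X F)⁻¹) :
    (MDR2 μ X Y J F S).trace = kappaF μ X Y J F := by
  have hterm : ∀ u : F → ℝ, (S * vecMulVec u u * S).trace = u ⬝ᵥ (covM μ X F)⁻¹ *ᵥ u := by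
    intro u
    rw [trace_mul_cycle, hS, mul_vecMulVec, trace_vecMulVec, dotProduct_comm]
  simp only [MDR2, kappaF, trace_sum, trace_smul, smul_eq_mul, hterm]

end Covariance

section Residual

variable {Ω : Type*} [MeasurableSpace Ω] {μ : Measure Ω} {p H : ℕ} {X : Ω → Fin p → ℝ}
  {F : Finset (Fin p)} {j : Fin p}

theorem setIntegral_xres
    (hres : xres μ X F j =ᵐ[μ] fun ω => X ω j - ∑ i : F, thetaJF μ X F j i * X ω i)
    (hint : ∀ i, Integrable (fun ω => X ω i) μ) (s : Set Ω) :
    ∫ ω in s, xres μ X F j ω ∂μ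
      = ∫ ω in s, X ω j ∂μ - thetaJF μ X F j ⬝ᵥ fun i => ∫ ω in s, X ω i ∂μ := by
  rw [integral_congr_ae (ae_restrict_of_ae hres)]
  exact integral_sub_sum_mul (g := fun (i : F) ω => X ω i) (hint j).restrict
    (fun i => (hint i).restrict) _

theorem sigma2_eq_integral_sq
    (hres : xres μ X F j =ᵐ[μ] fun ω => X ω j - ∑ i : F, thetaJF μ X F j i * X ω i)
    (hint : ∀ i, Integrable (fun ω => X ω i) μ) (hmean : ∀ i, ∫ ω, X ω i ∂μ = 0) :
    sigma2 μ X F j = ∫ ω, xres μ X F j ω ^ 2 ∂μ := by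
  have hzero : ∫ ω, xres μ X F j ω ∂μ = 0 := by
    rw [← setIntegral_univ, setIntegral_xres hres hint]
    simp [hmean]
  rw [sigma2, varF, hzero]
  ring

theorem sigma2_eq_schur [IsFiniteMeasure μ]
    (hres : xres μ X F j =ᵐ[μ] fun ω => X ω j - ∑ i : F, thetaJF μ X F j i * X ω i)
    (hX : ∀ i, MemLp (fun ω => X ω i) 2 μ) (hmean : ∀ i, ∫ ω, X ω i ∂μ = 0)
    (hF : IsUnit (covM μ X F).det) :
    sigma2 μ X F j
      = ∫ ω, X ω j * X ω j ∂μ - thetaJF μ X F j ⬝ᵥ fun i : F => ∫ ω, X ω j * X ω i ∂μ := by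
  rw [sigma2_eq_integral_sq hres (fun i => (hX i).integrable one_le_two) hmean,
    integral_congr_ae (hres.mono fun _ hω => congrArg (· ^ 2) hω),
    integral_sub_sum_mul_sq (g := fun (i : F) ω => X ω i) (hX j) (fun i => hX i)]
  change _ - _ + _ ⬝ᵥ covM μ X F *ᵥ _ = _
  rw [covM_mulVec_thetaJF hF]
  ring

theorem sigma2_pos [IsFiniteMeasure μ]
    (hres : xres μ X F j =ᵐ[μ] fun ω => X ω j - ∑ i : F, thetaJF μ X F j i * X ω i)
    (hX : ∀ i, MemLp (fun ω => X ω i) 2 μ) (hmean : ∀ i, ∫ ω, X ω i ∂μ = 0)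
    (hpos : (covM μ X univ).PosDef) (hj : j ∉ F) :
    0 < sigma2 μ X F j := by
  have hnonneg : 0 ≤ sigma2 μ X F j := by
    rw [sigma2_eq_integral_sq hres (fun i => (hX i).integrable one_le_two) hmean]
    exact integral_nonneg fun _ => sq_nonneg _
  have hne : sigma2 μ X F j ≠ 0 := by
    rw [sigma2_eq_schur hres hX hmean (isUnit_covM_det hpos F)]
    exact schur_complement_ne_zero (T := covM μ X (insert j F)) hj (covM_isSymm _)
      (isUnit_covM_det hpos _) (covM_mulVec_thetaJF (isUnit_covM_det hpos F))
  exact hnonneg.lt_of_ne hne.symm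

theorem sliceU_insert_self_sub_thetaJF_dotProduct
    (hres : xres μ X F j =ᵐ[μ] fun ω => X ω j - ∑ i : F, thetaJF μ X F j i * X ω i)
    (hint : ∀ i, Integrable (fun ω => X ω i) μ) (hsig : 0 < sigma2 μ X F j)
    (Y : Ω → ℝ) (J : Fin H → Set ℝ) (h : Fin H) :
    sliceU μ X Y J (insert j F) h (selfInsert j F) - thetaJF μ X F j ⬝ᵥ sliceU μ X Y J F h
      = √(sigma2 μ X F j) * gammaH μ X Y J F j h := by
  have hσ : √(sigma2 μ X F j) ≠ 0 := (Real.sqrt_pos.2 hsig).ne'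
  have hdot : thetaJF μ X F j ⬝ᵥ sliceU μ X Y J F h
      = (thetaJF μ X F j ⬝ᵥ fun i : F => ∫ ω in Y ⁻¹' J h, X ω i ∂μ) / sliceP μ Y J h := by
    simp only [sliceU, dotProduct, sum_div, mul_div_assoc]
  simp only [gammaH, gammaRes, integral_div, setIntegral_xres hres hint, hdot]
  change (∫ ω in Y ⁻¹' J h, X ω j ∂μ) / sliceP μ Y J h - _ = _
  rw [← sub_div, mul_div_assoc', mul_div_cancel₀ _ hσ]

theorem sliceU_dotProduct_inv_covM_insert [IsFiniteMeasure μ]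
    (hres : xres μ X F j =ᵐ[μ] fun ω => X ω j - ∑ i : F, thetaJF μ X F j i * X ω i)
    (hX : ∀ i, MemLp (fun ω => X ω i) 2 μ) (hmean : ∀ i, ∫ ω, X ω i ∂μ = 0)
    (hpos : (covM μ X univ).PosDef) (hj : j ∉ F) (Y : Ω → ℝ) (J : Fin H → Set ℝ) (h : Fin H) :
    sliceU μ X Y J (insert j F) h ⬝ᵥ (covM μ X (insert j F))⁻¹ *ᵥ sliceU μ X Y J (insert j F) h
      = sliceU μ X Y J F h ⬝ᵥ (covM μ X F)⁻¹ *ᵥ sliceU μ X Y J F h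
        + gammaH μ X Y J F j h ^ 2 := by
  have hF := isUnit_covM_det hpos F
  have hsig := sigma2_pos hres hX hmean hpos hj
  calc _ = sliceU μ X Y J F h ⬝ᵥ (covM μ X F)⁻¹ *ᵥ sliceU μ X Y J F h
        + (sliceU μ X Y J (insert j F) h (selfInsert j F)
            - thetaJF μ X F j ⬝ᵥ sliceU μ X Y J F h) ^ 2
          / (∫ ω, X ω j * X ω j ∂μ - thetaJF μ X F j ⬝ᵥ fun i : F => ∫ ω, X ω j * X ω i ∂μ) :=
        dotProduct_nonsing_inv_mulVec_insert hj (covM_isSymm _) (isUnit_covM_det hpos _) hF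
          (covM_mulVec_thetaJF hF) _
    _ = _ := by
      rw [← sigma2_eq_schur hres hX hmean hF, sliceU_insert_self_sub_thetaJF_dotProduct hres
        (fun i => (hX i).integrable one_le_two) hsig, mul_pow, Real.sq_sqrt hsig.le,
        mul_div_cancel_left₀ _ hsig.ne']

theorem kappaF_insert [IsFiniteMeasure μ] (hLCM : SubsetLCM μ X)
    (hX : ∀ i, MemLp (fun ω => X ω i) 2 μ) (hmean : ∀ i, ∫ ω, X ω i ∂μ = 0)
    (hpos : (covM μ X univ).PosDef) (hj : j ∉ F) (Y : Ω → ℝ) (J : Fin H → Set ℝ) :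
    kappaF μ X Y J (insert j F) = kappaF μ X Y J F + rhoJF μ X Y J F j := by
  have hres : xres μ X F j =ᵐ[μ] fun ω => X ω j - ∑ i : F, thetaJF μ X F j i * X ω i :=
    (hLCM F j hj).mono fun ω hω => by rw [xres, hω]
  simp only [kappaF, rhoJF, ← sum_add_distrib, ← mul_add,
    sliceU_dotProduct_inv_covM_insert hres hX hmean hpos hj]

end Residual

end TracePursuit

open TracePursuit

theorem dr3_trace_identity_general {Ω : Type*} [m0 : MeasurableSpace Ω]
    (μ : Measure Ω) [IsProbabilityMeasure μ]
    {p H : ℕ} (X : Ω → Fin p → ℝ) (Y : Ω → ℝ)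
    (hmom : ∀ i, MemLp (fun ω => X ω i) 4 μ)
    (hmean : ∀ i, ∫ ω, X ω i ∂μ = 0)
    (hpos : (covM μ X Finset.univ).PosDef)
    (J : Fin H → Set ℝ)
    (invS : ∀ F : Finset (Fin p), Matrix F F ℝ)
    (hinvS : ∀ F, IsInvSqrt (invS F) (covM μ X F))
    (hLCM : SubsetLCM μ X)
    (F : Finset (Fin p)) (j : Fin p) (hj : j ∉ F) :
    (kappaF μ X Y J (insert j F) • MDR2 μ X Y J (insert j F) (invS (insert j F))).trace
      = (kappaF μ X Y J F • MDR2 μ X Y J F (invS F)).trace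
        + 2 * kappaF μ X Y J F * rhoJF μ X Y J F j
        + rhoJF μ X Y J F j ^ 2 := by
  have hX : ∀ i, MemLp (fun ω => X ω i) 2 μ := fun i => (hmom i).mono_exponent (by norm_num)
  rw [trace_smul, trace_smul, trace_MDR2 (hinvS _).2, trace_MDR2 (hinvS _).2,
    kappaF_insert hLCM hX hmean hpos hj, smul_eq_mul, smul_eq_mul]
  ring

/-- Under the subset LCM assumption, with `m^{DR3}_F = Σ_h p_h U_{F,h}ᵀ Σ_F⁻¹ U_{F,h}` (the
scalar `κ_F`), for any `F ⊂ I` and `j ∈ Fᶜ`,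
`trace(m^{DR3}_{F∪{j}} M^{DR2}_{F∪{j}}) = trace(m^{DR3}_F M^{DR2}_F) + 2κ_F ϱ_{j|F} + ϱ_{j|F}²`. -/
theorem dr3_trace_identity {Ω : Type*} [m0 : MeasurableSpace Ω]
    (μ : Measure Ω) [IsProbabilityMeasure μ]
    {p H : ℕ} (X : Ω → Fin p → ℝ) (Y : Ω → ℝ)
    (hX : Measurable X) (hY : Measurable Y)
    (hmom : ∀ i, MemLp (fun ω => X ω i) 4 μ)
    (hmean : ∀ i, ∫ ω, X ω i ∂μ = 0)
    (hpos : (covM μ X Finset.univ).PosDef)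
    (J : Fin H → Set ℝ) (hJ : IsSlicePartition J)
    (hph : ∀ h, 0 < sliceP μ Y J h)
    (invS : ∀ F : Finset (Fin p), Matrix F F ℝ)
    (hinvS : ∀ F, IsInvSqrt (invS F) (covM μ X F))
    (hLCM : SubsetLCM μ X)
    (F : Finset (Fin p)) (j : Fin p) (hj : j ∉ F)
    (hsig : 0 < sigma2 μ X F j) :
    (kappaF μ X Y J (insert j F) • MDR2 μ X Y J (insert j F) (invS (insert j F))).trace
      = (kappaF μ X Y J F • MDR2 μ X Y J F (invS F)).trace
        + 2 * kappaF μ X Y J F * rhoJF μ X Y J F j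
        + rhoJF μ X Y J F j ^ 2 :=
  dr3_trace_identity_general (m0 := m0) μ X Y hmom hmean hpos J invS hinvS hLCM F j hj
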